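/- (Theorem 4, completeness part.) Let (f, λ, μ, φ) be a spatially homogeneous regular solution of the surface-symmetric Einstein–Vlasov–scalar field system in areal coordinates on [1,∞) with k ∈ {0, −1}. Let τ ↦ (t(τ), r(τ), w(τ), F) be a maximally extended future-directed timelike (m > 0) or null (m = 0, p⁰ > 0) geodesic with t(τ₀) = 1, satisfying dt/dτ = e^{−μ}√(m² + w² + F/t²), dw/dτ = −λ'(t)·p⁰·w, dF/dτ = 0. Then the proper time integral ∫₁^∞ e^{μ(t)} (m² + w(t)² + F/t²)^{−1/2} dt diverges, i.e., τ₊ = +∞: the spacetime is timelike and null geodesically complete in the expanding direction. -/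

import Mathlib

open MeasureTheory Real Filter

noncomputable section

/-- The energy density ρ of a spatially homogeneous solution. -/
def rhoH (mu phi : ℝ → ℝ) (f : ℝ → ℝ → ℝ → ℝ) (t : ℝ) : ℝ :=
  Real.pi / t ^ 2 *
      (∫ w : ℝ, ∫ F in Set.Ioi (0 : ℝ), Real.sqrt (1 + w ^ 2 + F / t ^ 2) * f t w F)
    + (1 / 2) * Real.exp (-2 * mu t) * (deriv phi t) ^ 2

/-- The radial pressure p of a spatially homogeneous solution. -/
def pH (mu phi : ℝ → ℝ) (f : ℝ → ℝ → ℝ → ℝ) (t : ℝ) : ℝ :=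
  Real.pi / t ^ 2 *
      (∫ w : ℝ, ∫ F in Set.Ioi (0 : ℝ),
        w ^ 2 / Real.sqrt (1 + w ^ 2 + F / t ^ 2) * f t w F)
    + (1 / 2) * Real.exp (-2 * mu t) * (deriv phi t) ^ 2

/-- The tangential pressure q of a spatially homogeneous solution. -/
def qH (mu phi : ℝ → ℝ) (f : ℝ → ℝ → ℝ → ℝ) (t : ℝ) : ℝ :=
  Real.pi / t ^ 4 *
      (∫ w : ℝ, ∫ F in Set.Ioi (0 : ℝ),
        F / Real.sqrt (1 + w ^ 2 + F / t ^ 2) * f t w F)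
    + Real.exp (-2 * mu t) * (deriv phi t) ^ 2

/-- Membership in the time domain `[1, T)` (with `T ≤ ∞` an extended real). -/
def InDom (T : EReal) (t : ℝ) : Prop := 1 ≤ t ∧ (t : EReal) < T

/-- A spatially homogeneous regular solution of the surface-symmetric
Einstein–Vlasov–scalar field system in areal coordinates on `[1, T)` with
curvature parameter `k`: all unknowns depend only on `t` (and `(w, F)` for `f`),
and the reduced Vlasov, Einstein and wave equations hold. In this situation the
momentum density `j` vanishes. -/
structure IsEVSHom (k : ℝ) (T : EReal) (lam mu phi : ℝ → ℝ)
    (f : ℝ → ℝ → ℝ → ℝ) : Prop where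
  hT : (1 : EReal) < T
  f_nonneg : ∀ t w F, 0 ≤ f t w F
  supp_bdd : ∀ T' : ℝ, 1 ≤ T' → (T' : EReal) < T →
    ∃ C : ℝ, ∀ t w F, 1 ≤ t → t ≤ T' → f t w F ≠ 0 → |w| ≤ C ∧ F ≤ C
  reg_lam : ∀ t, InDom T t → DifferentiableAt ℝ lam t
  reg_mu : ∀ t, InDom T t → DifferentiableAt ℝ mu t
  reg_phi : ∀ t, InDom T t → DifferentiableAt ℝ phi t
  reg_phi' : ∀ t, InDom T t → DifferentiableAt ℝ (deriv phi) t
  reg_f : ∀ t w F, InDom T t → 0 ≤ F →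
    DifferentiableAt ℝ (fun s => f s w F) t ∧ DifferentiableAt ℝ (fun v => f t v F) w
  vlasov : ∀ t w F, InDom T t → 0 ≤ F →
    deriv (fun s => f s w F) t - deriv lam t * w * deriv (fun v => f t v F) w = 0
  ee1 : ∀ t, InDom T t →
    Real.exp (-2 * mu t) * (2 * t * deriv lam t + 1) + k
      = 8 * Real.pi * t ^ 2 * rhoH mu phi f t
  ee2 : ∀ t, InDom T t →
    Real.exp (-2 * mu t) * (2 * t * deriv mu t - 1) - k
      = 8 * Real.pi * t ^ 2 * pH mu phi f t
  wave : ∀ t, InDom T t →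
    deriv (deriv phi) t + (deriv lam t - deriv mu t + 2 / t) * deriv phi t = 0

/-- The geodesic system in a spatially homogeneous surface-symmetric spacetime,
on the parameter interval `(a, b)`; `F` is conserved. -/
def GeoSysH (lam mu : ℝ → ℝ) (m F : ℝ) (a b : EReal) (tt ww : ℝ → ℝ) : Prop :=
  ∀ τ : ℝ, a < (τ : EReal) → (τ : EReal) < b →
    HasDerivAt tt
      (Real.exp (-(mu (tt τ))) * Real.sqrt (m ^ 2 + ww τ ^ 2 + F / tt τ ^ 2)) τ
    ∧ HasDerivAt ww
      (-(deriv lam (tt τ))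
        * (Real.exp (-(mu (tt τ))) * Real.sqrt (m ^ 2 + ww τ ^ 2 + F / tt τ ^ 2))
        * ww τ) τ

/-- A homogeneous geodesic on `(a, b)` is maximally extended to the future if it
is not the restriction of a geodesic on `(a, b')` with `b' > b`. -/
def GeoRightMaxH (lam mu : ℝ → ℝ) (m F : ℝ) (a b : EReal) (tt ww : ℝ → ℝ) : Prop :=
  GeoSysH lam mu m F a b tt ww ∧
  ∀ (b' : EReal) (tt' ww' : ℝ → ℝ), b < b' →
    GeoSysH lam mu m F a b' tt' ww' →
    ¬ (∀ τ : ℝ, a < (τ : EReal) → (τ : EReal) < b → tt' τ = tt τ ∧ ww' τ = ww τ)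


/-!
Along a homogeneous geodesic `w e^λ` is conserved, so `dt/dτ = e^{-μ} √(m² + w² + F/t²)` is a
function of `t` alone and `τ - τ₀ = G(t)`, the primitive of `dτ/dt` from `1`. For `k ≤ 0` the
Einstein equations with `ρ, p ≥ 0` make `t e^{-2μ} + k t` decreasing and `2λ + log t` increasing,
whence `e^{-2μ} ≤ e^{-2μ(1)} - k` and `w² ≤ w(1)² t`. Thus `dτ/dt ≳ t^{-1/2}`, so `G(t) → ∞` and
`t = G⁻¹(τ - τ₀)` is a geodesic defined for all `τ ≥ τ₀`; a maximal geodesic agrees with it and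
therefore has `τ₊ = ∞`.
-/

open Set Topology

lemma rhoH_nonneg {mu phi : ℝ → ℝ} {f : ℝ → ℝ → ℝ → ℝ} (hf : ∀ t w F, 0 ≤ f t w F) (t : ℝ) :
    0 ≤ rhoH mu phi f t := by
  have hint : 0 ≤ ∫ w : ℝ, ∫ F in Ioi (0 : ℝ), √(1 + w ^ 2 + F / t ^ 2) * f t w F :=
    integral_nonneg fun w => integral_nonneg fun F => mul_nonneg (sqrt_nonneg _) (hf t w F)
  unfold rhoH
  positivity

lemma pH_nonneg {mu phi : ℝ → ℝ} {f : ℝ → ℝ → ℝ → ℝ} (hf : ∀ t w F, 0 ≤ f t w F) (t : ℝ) :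
    0 ≤ pH mu phi f t := by
  have hint : 0 ≤ ∫ w : ℝ, ∫ F in Ioi (0 : ℝ), w ^ 2 / √(1 + w ^ 2 + F / t ^ 2) * f t w F :=
    integral_nonneg fun w => integral_nonneg fun F => mul_nonneg (by positivity) (hf t w F)
  unfold pH
  positivity

lemma inDom_top {t : ℝ} (ht : 1 ≤ t) : InDom ⊤ t := ⟨ht, EReal.coe_lt_top t⟩

section Einstein

variable {k : ℝ} {lam mu phi : ℝ → ℝ} {f : ℝ → ℝ → ℝ → ℝ}

lemma IsEVSHom.continuousOn_lam (h : IsEVSHom k ⊤ lam mu phi f) : ContinuousOn lam (Ici 1) :=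
  fun t ht => (h.reg_lam t (inDom_top ht)).continuousAt.continuousWithinAt

lemma IsEVSHom.continuousOn_mu (h : IsEVSHom k ⊤ lam mu phi f) : ContinuousOn mu (Ici 1) :=
  fun t ht => (h.reg_mu t (inDom_top ht)).continuousAt.continuousWithinAt

/-- The derivative is `-8π s² p ≤ 0` by the second Einstein equation. -/
lemma IsEVSHom.antitoneOn_mul_exp_neg_two_mu_add (h : IsEVSHom k ⊤ lam mu phi f) :
    AntitoneOn (fun s => s * exp (-2 * mu s) + k * s) (Ici 1) := by
  have hderiv : ∀ s, 1 ≤ s → HasDerivAt (fun s => s * exp (-2 * mu s) + k * s)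
      (exp (-2 * mu s) * (1 - 2 * s * deriv mu s) + k) s := by
    intro s hs
    have hmu := (h.reg_mu s (inDom_top hs)).hasDerivAt
    exact (((hasDerivAt_id' s).mul ((hmu.const_mul (-2)).exp)).add
      ((hasDerivAt_id' s).const_mul k)).congr_deriv (by ring)
  refine antitoneOn_of_hasDerivWithinAt_nonpos (convex_Ici 1)
    (fun s hs => (hderiv s hs).continuousAt.continuousWithinAt)
    (fun s hs => (hderiv s (interior_subset hs)).hasDerivWithinAt) fun s hs => ?_
  rw [interior_Ici] at hs
  have hp := pH_nonneg (mu := mu) (phi := phi) h.f_nonneg s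
  have hee2 := h.ee2 s (inDom_top (le_of_lt hs))
  have hrhs : 0 ≤ 8 * π * s ^ 2 * pH mu phi f s := by positivity
  linarith

lemma IsEVSHom.exp_neg_two_mu_le (h : IsEVSHom k ⊤ lam mu phi f) (hk : k ≤ 0) {t : ℝ}
    (ht : 1 ≤ t) : exp (-2 * mu t) ≤ exp (-2 * mu 1) - k := by
  have hanti := h.antitoneOn_mul_exp_neg_two_mu_add self_mem_Ici ht ht
  simp only [one_mul, mul_one] at hanti
  have hmul : t * exp (-2 * mu t) ≤ t * (exp (-2 * mu 1) - k) := by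
    nlinarith [mul_nonneg (sub_nonneg.2 ht) (exp_pos (-2 * mu 1)).le]
  exact le_of_mul_le_mul_left hmul (by linarith)

/-- The first Einstein equation with `ρ ≥ 0` and `k ≤ 0` gives `2 t λ' + 1 ≥ 0`. -/
lemma IsEVSHom.monotoneOn_two_mul_lam_add_log (h : IsEVSHom k ⊤ lam mu phi f) (hk : k ≤ 0) :
    MonotoneOn (fun s => 2 * lam s + log s) (Ici 1) := by
  have hderiv : ∀ s, 1 ≤ s → HasDerivAt (fun s => 2 * lam s + log s)
      (2 * deriv lam s + s⁻¹) s := fun s hs =>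
    ((h.reg_lam s (inDom_top hs)).hasDerivAt.const_mul 2).add (hasDerivAt_log (by linarith))
  refine monotoneOn_of_hasDerivWithinAt_nonneg (convex_Ici 1)
    (fun s hs => (hderiv s hs).continuousAt.continuousWithinAt)
    (fun s hs => (hderiv s (interior_subset hs)).hasDerivWithinAt) fun s hs => ?_
  rw [interior_Ici] at hs
  have hs0 : 0 < s := by linarith [mem_Ioi.1 hs]
  have hrho := rhoH_nonneg (mu := mu) (phi := phi) h.f_nonneg s
  have hee1 := h.ee1 s (inDom_top (le_of_lt hs))
  have hrhs : 0 ≤ 8 * π * s ^ 2 * rhoH mu phi f s := by positivity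
  have hfactor : 0 ≤ 2 * s * deriv lam s + 1 :=
    nonneg_of_mul_nonneg_right (by linarith) (exp_pos (-2 * mu s))
  have hs_inv : 2 * deriv lam s + s⁻¹ = (2 * s * deriv lam s + 1) / s := by
    field_simp
  rw [hs_inv]
  positivity

lemma IsEVSHom.exp_lam_sub_le_sqrt (h : IsEVSHom k ⊤ lam mu phi f) (hk : k ≤ 0) {t : ℝ}
    (ht : 1 ≤ t) : exp (lam 1 - lam t) ≤ √t := by
  have hmono := h.monotoneOn_two_mul_lam_add_log hk self_mem_Ici ht ht
  simp only [log_one] at hmono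
  rw [← exp_log (sqrt_pos.2 (by linarith : (0 : ℝ) < t)), log_sqrt (by linarith)]
  exact exp_le_exp.2 (by linarith)

end Einstein

section ClampedPrimitive

variable {g : ℝ → ℝ}

/-- Only the values of `g` on `[1, ∞)` matter; freezing `g` at `g 1` to the left of `1` makes the
primitive tend to `-∞` at `-∞`, so that it can be inverted on all of `ℝ`. -/
def clampedPrimitive (g : ℝ → ℝ) (x : ℝ) : ℝ := ∫ t in (1 : ℝ)..x, g (max t 1)

lemma ContinuousOn.continuous_comp_max_one (hg : ContinuousOn g (Ici 1)) :
    Continuous fun t => g (max t 1) :=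
  hg.comp_continuous (continuous_id.max continuous_const) fun t => le_max_right t 1

lemma hasDerivAt_clampedPrimitive (hg : ContinuousOn g (Ici 1)) (x : ℝ) :
    HasDerivAt (clampedPrimitive g) (g (max x 1)) x :=
  (hg.continuous_comp_max_one.integral_hasStrictDerivAt 1 x).hasDerivAt

lemma clampedPrimitive_one : clampedPrimitive g 1 = 0 := intervalIntegral.integral_same

lemma strictMono_clampedPrimitive (hg : ContinuousOn g (Ici 1)) (hpos : ∀ t, 1 ≤ t → 0 < g t) :
    StrictMono (clampedPrimitive g) :=
  strictMono_of_hasDerivAt_pos (hasDerivAt_clampedPrimitive hg) fun x => hpos _ (le_max_right x 1)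

lemma clampedPrimitive_of_le_one {x : ℝ} (hx : x ≤ 1) : clampedPrimitive g x = (x - 1) * g 1 := by
  have hconst : EqOn (fun t => g (max t 1)) (fun _ => g 1) (uIcc 1 x) := fun t ht => by
    rw [uIcc_of_ge hx] at ht
    simp only [max_eq_right ht.2]
  rw [clampedPrimitive, intervalIntegral.integral_congr hconst, intervalIntegral.integral_const,
    smul_eq_mul]

lemma tendsto_clampedPrimitive_atBot (hg : 0 < g 1) :
    Tendsto (clampedPrimitive g) atBot atBot := by
  have hlin : Tendsto (fun x => (x - 1) * g 1) atBot atBot :=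
    (tendsto_atBot_add_const_right _ (-1) tendsto_id).atBot_mul_const hg
  refine hlin.congr' ?_
  filter_upwards [eventually_le_atBot 1] with x hx
  exact (clampedPrimitive_of_le_one hx).symm

lemma tendsto_clampedPrimitive_atTop (hg : ContinuousOn g (Ici 1)) {c : ℝ} (hc : 0 < c)
    (hlow : ∀ t, 1 ≤ t → c / √t ≤ g t) : Tendsto (clampedPrimitive g) atTop atTop := by
  have hbound : ∀ x, 1 ≤ x → 2 * c * (√x - 1) ≤ clampedPrimitive g x := by
    intro x hx
    have hpos : ∀ t ∈ uIcc 1 x, 0 < t := fun t ht => by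
      rw [uIcc_of_le hx] at ht
      linarith [ht.1]
    have hderiv : ∀ t ∈ uIcc 1 x, HasDerivAt (fun t => 2 * c * √t) (c / √t) t := by
      intro t ht
      exact ((hasDerivAt_sqrt (hpos t ht).ne').const_mul (2 * c)).congr_deriv (by field_simp)
    have hint : IntervalIntegrable (fun t => c / √t) volume 1 x :=
      (continuousOn_const.div continuous_sqrt.continuousOn
        fun t ht => (sqrt_pos.2 (hpos t ht)).ne').intervalIntegrable
    calc 2 * c * (√x - 1) = ∫ t in (1 : ℝ)..x, c / √t := by
          rw [intervalIntegral.integral_eq_sub_of_hasDerivAt hderiv hint, sqrt_one]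
          ring
      _ ≤ clampedPrimitive g x :=
          intervalIntegral.integral_mono_on hx hint
            (hg.continuous_comp_max_one.intervalIntegrable 1 x) fun t ht => by
              rw [max_eq_left ht.1]
              exact hlow t ht.1
  refine tendsto_atTop_mono' atTop ((eventually_ge_atTop 1).mono hbound) ?_
  exact (tendsto_atTop_add_const_right _ (-1) tendsto_sqrt_atTop).const_mul_atTop
    (by positivity)

end ClampedPrimitive

lemma exists_inverse_hasDerivAt {P p : ℝ → ℝ} (hP : ∀ x, HasDerivAt P (p x) x)
    (hp : ∀ x, 0 < p x) (htop : Tendsto P atTop atTop) (hbot : Tendsto P atBot atBot) :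
    ∃ T : ℝ → ℝ, Function.LeftInverse T P ∧ Function.RightInverse T P ∧
      ∀ y, HasDerivAt T (p (T y))⁻¹ y := by
  have hsurj : Function.Surjective P :=
    (continuous_iff_continuousAt.2 fun x => (hP x).continuousAt).surjective htop hbot
  let e := (strictMono_of_hasDerivAt_pos hP hp).orderIsoOfSurjective P hsurj
  exact ⟨e.symm, e.symm_apply_apply, e.apply_symm_apply, fun y =>
    (hP _).of_local_left_inverse e.symm.continuous.continuousAt (hp _).ne'
      (Eventually.of_forall e.apply_symm_apply)⟩

section Geodesic

variable {k : ℝ} {lam mu phi : ℝ → ℝ} {f : ℝ → ℝ → ℝ → ℝ} {m F w₀ : ℝ}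

/-- `w` at time `t` on the homogeneous geodesic with `w = w₀` at `t = 1`: `w e^λ` is conserved. -/
def geodesicW (lam : ℝ → ℝ) (w₀ t : ℝ) : ℝ := w₀ * exp (lam 1 - lam t)

/-- `dt/dτ` on that geodesic, as a function of `t`. -/
def geodesicSpeed (lam mu : ℝ → ℝ) (m F w₀ t : ℝ) : ℝ :=
  exp (-(mu t)) * √(m ^ 2 + geodesicW lam w₀ t ^ 2 + F / t ^ 2)

/-- `dτ/dt` on that geodesic, the integrand of the proper time. -/
def properTimeDensity (lam mu : ℝ → ℝ) (m F w₀ t : ℝ) : ℝ :=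
  exp (mu t) / √(m ^ 2 + geodesicW lam w₀ t ^ 2 + F / t ^ 2)

lemma hasDerivAt_geodesicW {l t : ℝ} (hlam : HasDerivAt lam l t) :
    HasDerivAt (geodesicW lam w₀) (-l * geodesicW lam w₀ t) t :=
  ((hlam.const_sub (lam 1)).exp.const_mul w₀).congr_deriv (by rw [geodesicW]; ring)

lemma properTimeDensity_eq_inv (t : ℝ) :
    properTimeDensity lam mu m F w₀ t = (geodesicSpeed lam mu m F w₀ t)⁻¹ := by
  rw [geodesicSpeed, mul_inv, exp_neg, inv_inv, ← div_eq_mul_inv, properTimeDensity]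

lemma geodesicSpeed_pos (hF : 0 ≤ F) (hpos : 0 < m ^ 2 + w₀ ^ 2 + F) {t : ℝ} (ht : t ≠ 0) :
    0 < geodesicSpeed lam mu m F w₀ t := by
  refine mul_pos (exp_pos _) (sqrt_pos.2 ?_)
  rw [geodesicW, mul_pow]
  have hexp := pow_pos (exp_pos (lam 1 - lam t)) 2
  rcases (show 0 < m ^ 2 ∨ 0 < w₀ ^ 2 ∨ 0 < F by by_contra! H; linarith) with h | h | h <;>
    positivity

lemma continuousOn_geodesicSpeed (hlam : ContinuousOn lam (Ici 1)) (hmu : ContinuousOn mu (Ici 1)) :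
    ContinuousOn (geodesicSpeed lam mu m F w₀) (Ici 1) := by
  have hsq : ∀ t ∈ Ici (1 : ℝ), t ^ 2 ≠ 0 := fun t ht => pow_ne_zero 2 (by linarith [mem_Ici.1 ht])
  exact hmu.neg.rexp.mul ((continuousOn_const.add ((continuousOn_const.mul
    (continuousOn_const.sub hlam).rexp).pow 2)).add
    (continuousOn_const.div (continuousOn_id.pow 2) hsq)).sqrt

lemma properTimeDensity_pos (hF : 0 ≤ F) (hpos : 0 < m ^ 2 + w₀ ^ 2 + F) {t : ℝ} (ht : t ≠ 0) :
    0 < properTimeDensity lam mu m F w₀ t := by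
  rw [properTimeDensity_eq_inv]
  exact inv_pos.2 (geodesicSpeed_pos hF hpos ht)

lemma continuousOn_properTimeDensity (hlam : ContinuousOn lam (Ici 1))
    (hmu : ContinuousOn mu (Ici 1)) (hF : 0 ≤ F) (hpos : 0 < m ^ 2 + w₀ ^ 2 + F) :
    ContinuousOn (properTimeDensity lam mu m F w₀) (Ici 1) :=
  ((continuousOn_geodesicSpeed hlam hmu).inv₀ fun t ht =>
    (geodesicSpeed_pos hF hpos (by linarith [mem_Ici.1 ht])).ne').congr
    fun t _ => properTimeDensity_eq_inv t

lemma IsEVSHom.geodesicSpeed_le (h : IsEVSHom k ⊤ lam mu phi f) (hk : k ≤ 0) (hF : 0 ≤ F)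
    {t : ℝ} (ht : 1 ≤ t) : geodesicSpeed lam mu m F w₀ t
      ≤ √((exp (-2 * mu 1) - k) * (m ^ 2 + w₀ ^ 2 + F)) * √t := by
  have hC : 0 ≤ exp (-2 * mu 1) - k := by linarith [exp_pos (-2 * mu 1)]
  have hexp_mu : exp (-(mu t)) ≤ √(exp (-2 * mu 1) - k) := by
    rw [le_sqrt (exp_nonneg _) hC, ← exp_nat_mul]
    convert h.exp_neg_two_mu_le hk ht using 2
    push_cast
    ring
  have hW : geodesicW lam w₀ t ^ 2 ≤ w₀ ^ 2 * t := by
    rw [geodesicW, mul_pow]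
    gcongr
    calc exp (lam 1 - lam t) ^ 2 ≤ √t ^ 2 := by gcongr; exact h.exp_lam_sub_le_sqrt hk ht
      _ = t := sq_sqrt (by linarith)
  have hF_le : F / t ^ 2 ≤ F * t := by
    calc F / t ^ 2 ≤ F := div_le_self hF (one_le_pow₀ ht)
      _ ≤ F * t := le_mul_of_one_le_right hF ht
  have hm_le : m ^ 2 ≤ m ^ 2 * t := le_mul_of_one_le_right (sq_nonneg m) ht
  calc geodesicSpeed lam mu m F w₀ t
      ≤ √(exp (-2 * mu 1) - k) * √((m ^ 2 + w₀ ^ 2 + F) * t) := by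
        unfold geodesicSpeed
        gcongr
        linarith
    _ = √((exp (-2 * mu 1) - k) * (m ^ 2 + w₀ ^ 2 + F)) * √t := by
        rw [sqrt_mul hC, sqrt_mul (by positivity), mul_assoc]

lemma IsEVSHom.tendsto_clampedPrimitive_properTimeDensity (h : IsEVSHom k ⊤ lam mu phi f)
    (hk : k ≤ 0) (hF : 0 ≤ F) (hpos : 0 < m ^ 2 + w₀ ^ 2 + F) :
    Tendsto (clampedPrimitive (properTimeDensity lam mu m F w₀)) atTop atTop := by
  have hA : 0 < √((exp (-2 * mu 1) - k) * (m ^ 2 + w₀ ^ 2 + F)) :=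
    sqrt_pos.2 (mul_pos (by linarith [exp_pos (-2 * mu 1)]) hpos)
  refine tendsto_clampedPrimitive_atTop
    (continuousOn_properTimeDensity h.continuousOn_lam h.continuousOn_mu hF hpos)
    (inv_pos.2 hA) fun t ht => ?_
  rw [div_eq_mul_inv, ← mul_inv, properTimeDensity_eq_inv]
  exact inv_anti₀ (geodesicSpeed_pos hF hpos (by linarith)) (h.geodesicSpeed_le hk hF ht)

lemma IsEVSHom.exists_leftInverse_clampedPrimitive_properTimeDensity
    (h : IsEVSHom k ⊤ lam mu phi f) (hk : k ≤ 0) (hF : 0 ≤ F) (hpos : 0 < m ^ 2 + w₀ ^ 2 + F) :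
    ∃ T : ℝ → ℝ, Function.LeftInverse T (clampedPrimitive (properTimeDensity lam mu m F w₀)) ∧
      ∀ y, 0 < y → 1 ≤ T y ∧ HasDerivAt T (geodesicSpeed lam mu m F w₀ (T y)) y := by
  have hg := continuousOn_properTimeDensity h.continuousOn_lam h.continuousOn_mu hF hpos
  have hgpos : ∀ t, 1 ≤ t → 0 < properTimeDensity lam mu m F w₀ t := fun t ht =>
    properTimeDensity_pos hF hpos (by linarith)
  obtain ⟨T, hTG, hGT, hT⟩ := exists_inverse_hasDerivAt (hasDerivAt_clampedPrimitive hg)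
    (fun x => hgpos _ (le_max_right x 1)) (h.tendsto_clampedPrimitive_properTimeDensity hk hF hpos)
    (tendsto_clampedPrimitive_atBot (hgpos 1 le_rfl))
  refine ⟨T, hTG, fun y hy => ?_⟩
  have hT1 : 1 ≤ T y := by
    rw [← (strictMono_clampedPrimitive hg hgpos).le_iff_le, hGT, clampedPrimitive_one]
    exact hy.le
  exact ⟨hT1, by simpa only [max_eq_left hT1, properTimeDensity_eq_inv, inv_inv] using hT y⟩

end Geodesic

lemma eq_of_forall_mem_Icc_hasDerivAt_zero {g : ℝ → ℝ} {x y : ℝ} (hxy : x ≤ y)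
    (hg : ∀ z ∈ Icc x y, HasDerivAt g 0 z) : g y = g x :=
  constant_of_has_deriv_right_zero (fun z hz => (hg z hz).continuousAt.continuousWithinAt)
    (fun z hz => (hg z (Ico_subset_Icc_self hz)).hasDerivWithinAt) y ⟨hxy, le_rfl⟩

lemma Icc_subset_preimage_coe_Ioo {a b : EReal} {x y : ℝ} (ha : a < x) (hb : (y : EReal) < b) :
    Icc x y ⊆ ((↑) : ℝ → EReal) ⁻¹' Ioo a b := fun _ hz =>
  ⟨ha.trans_le (EReal.coe_le_coe_iff.2 hz.1), (EReal.coe_le_coe_iff.2 hz.2).trans_lt hb⟩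

namespace GeoSysH

variable {lam mu : ℝ → ℝ} {m F : ℝ} {a b : EReal} {tt ww : ℝ → ℝ} {τ₀ τ : ℝ}

lemma monotoneOn (hsys : GeoSysH lam mu m F a b tt ww) :
    MonotoneOn tt (((↑) : ℝ → EReal) ⁻¹' Ioo a b) := by
  have hopen : IsOpen (((↑) : ℝ → EReal) ⁻¹' Ioo a b) :=
    isOpen_Ioo.preimage continuous_coe_real_ereal
  refine monotoneOn_of_hasDerivWithinAt_nonneg
    (f' := fun σ => exp (-(mu (tt σ))) * √(m ^ 2 + ww σ ^ 2 + F / tt σ ^ 2))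
    (ordConnected_Ioo.preimage_mono EReal.coe_strictMono.monotone).convex
    (fun σ hσ => (hsys σ hσ.1 hσ.2).1.continuousAt.continuousWithinAt) (fun σ hσ => ?_)
    fun σ _ => by positivity
  rw [hopen.interior_eq] at hσ ⊢
  exact (hsys σ hσ.1 hσ.2).1.hasDerivWithinAt

lemma one_le (hsys : GeoSysH lam mu m F a b tt ww) (ha : a < τ₀) (ht₀ : tt τ₀ = 1)
    (hτ : τ₀ ≤ τ) (hb : (τ : EReal) < b) : 1 ≤ tt τ :=
  ht₀ ▸ hsys.monotoneOn (Icc_subset_preimage_coe_Ioo ha hb ⟨le_rfl, hτ⟩)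
    (Icc_subset_preimage_coe_Ioo ha hb ⟨hτ, le_rfl⟩) hτ

lemma eq_geodesicW (hsys : GeoSysH lam mu m F a b tt ww)
    (hlam : ∀ t, 1 ≤ t → DifferentiableAt ℝ lam t) (ha : a < τ₀) (ht₀ : tt τ₀ = 1)
    (hτ : τ₀ ≤ τ) (hb : (τ : EReal) < b) : ww τ = geodesicW lam (ww τ₀) (tt τ) := by
  have hconst : ww τ * exp (lam (tt τ)) = ww τ₀ * exp (lam (tt τ₀)) := by
    refine eq_of_forall_mem_Icc_hasDerivAt_zero (g := fun σ => ww σ * exp (lam (tt σ))) hτ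
      fun σ hσ => ?_
    have hσ' := Icc_subset_preimage_coe_Ioo ha hb hσ
    obtain ⟨htt, hww⟩ := hsys σ hσ'.1 hσ'.2
    have hlamσ := (hlam _ (hsys.one_le ha ht₀ hσ.1 hσ'.2)).hasDerivAt
    exact (hww.mul (hlamσ.comp σ htt).exp).congr_deriv (by ring)
  rw [ht₀] at hconst
  rw [geodesicW, exp_sub, mul_div_assoc', ← hconst, mul_div_assoc, div_self (exp_ne_zero _),
    mul_one]

lemma hasDerivAt_eq_geodesicSpeed (hsys : GeoSysH lam mu m F a b tt ww)
    (hlam : ∀ t, 1 ≤ t → DifferentiableAt ℝ lam t) (ha : a < τ₀) (ht₀ : tt τ₀ = 1)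
    (hτ : τ₀ ≤ τ) (hb : (τ : EReal) < b) :
    HasDerivAt tt (geodesicSpeed lam mu m F (ww τ₀) (tt τ)) τ := by
  have hτ' := Icc_subset_preimage_coe_Ioo ha hb ⟨hτ, le_rfl⟩
  have htt := (hsys τ hτ'.1 hτ'.2).1
  rwa [hsys.eq_geodesicW hlam ha ht₀ hτ hb] at htt

lemma clampedPrimitive_eq (hsys : GeoSysH lam mu m F a b tt ww)
    (hlam : ∀ t, 1 ≤ t → DifferentiableAt ℝ lam t) (hmu : ContinuousOn mu (Ici 1))
    (hF : 0 ≤ F) (hpos : 0 < m ^ 2 + ww τ₀ ^ 2 + F) (ha : a < τ₀) (ht₀ : tt τ₀ = 1)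
    (hτ : τ₀ ≤ τ) (hb : (τ : EReal) < b) :
    clampedPrimitive (properTimeDensity lam mu m F (ww τ₀)) (tt τ) = τ - τ₀ := by
  have hg := continuousOn_properTimeDensity
    (fun t ht => (hlam t ht).continuousAt.continuousWithinAt) hmu hF hpos
  suffices hconst : clampedPrimitive (properTimeDensity lam mu m F (ww τ₀)) (tt τ) - τ
      = clampedPrimitive (properTimeDensity lam mu m F (ww τ₀)) (tt τ₀) - τ₀ by
    rw [ht₀, clampedPrimitive_one] at hconst
    linarith
  refine eq_of_forall_mem_Icc_hasDerivAt_zero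
    (g := fun σ => clampedPrimitive (properTimeDensity lam mu m F (ww τ₀)) (tt σ) - σ)
    hτ fun σ hσ => ?_
  have hσb := (Icc_subset_preimage_coe_Ioo ha hb hσ).2
  have ht1 := hsys.one_le ha ht₀ hσ.1 hσb
  have hderiv := ((hasDerivAt_clampedPrimitive hg (tt σ)).comp σ
    (hsys.hasDerivAt_eq_geodesicSpeed hlam ha ht₀ hσ.1 hσb)).sub (hasDerivAt_id' σ)
  refine hderiv.congr_deriv ?_
  rw [max_eq_left ht1, properTimeDensity_eq_inv,
    inv_mul_cancel₀ (geodesicSpeed_pos hF hpos (by linarith)).ne', sub_self]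

lemma exists_apply_eq (hsys : GeoSysH lam mu m F a ⊤ tt ww)
    (hlam : ∀ t, 1 ≤ t → DifferentiableAt ℝ lam t) (hmu : ContinuousOn mu (Ici 1))
    (hF : 0 ≤ F) (hpos : 0 < m ^ 2 + ww τ₀ ^ 2 + F) (ha : a < τ₀) (ht₀ : tt τ₀ = 1)
    {t : ℝ} (ht : 1 ≤ t) : ∃ τ, τ₀ ≤ τ ∧ tt τ = t := by
  have hG := strictMono_clampedPrimitive
    (continuousOn_properTimeDensity (fun t ht => (hlam t ht).continuousAt.continuousWithinAt)
      hmu hF hpos) fun t ht => properTimeDensity_pos (w₀ := ww τ₀) hF hpos (by linarith)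
  have hτ : τ₀ ≤ τ₀ + clampedPrimitive (properTimeDensity lam mu m F (ww τ₀)) t := by
    simpa only [le_add_iff_nonneg_right, clampedPrimitive_one] using hG.monotone ht
  refine ⟨_, hτ, hG.injective ?_⟩
  rw [hsys.clampedPrimitive_eq hlam hmu hF hpos ha ht₀ hτ (EReal.coe_lt_top _),
    add_sub_cancel_left]

lemma integral_eq_clampedPrimitive (hsys : GeoSysH lam mu m F a ⊤ tt ww)
    (hlam : ∀ t, 1 ≤ t → DifferentiableAt ℝ lam t) (hmu : ContinuousOn mu (Ici 1))
    (hF : 0 ≤ F) (hpos : 0 < m ^ 2 + ww τ₀ ^ 2 + F) (ha : a < τ₀) (ht₀ : tt τ₀ = 1)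
    {W : ℝ → ℝ} (hW : ∀ τ : ℝ, a < (τ : EReal) → (τ : EReal) < ⊤ → W (tt τ) = ww τ)
    {x : ℝ} (hx : 1 ≤ x) :
    ∫ t in (1 : ℝ)..x, exp (mu t) / √(m ^ 2 + W t ^ 2 + F / t ^ 2)
      = clampedPrimitive (properTimeDensity lam mu m F (ww τ₀)) x := by
  refine intervalIntegral.integral_congr fun t ht => ?_
  rw [uIcc_of_le hx] at ht
  obtain ⟨τ, hτ, rfl⟩ := hsys.exists_apply_eq hlam hmu hF hpos ha ht₀ ht.1
  have hτ' := Icc_subset_preimage_coe_Ioo ha (EReal.coe_lt_top τ) ⟨hτ, le_rfl⟩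
  simp only [max_eq_left ht.1, properTimeDensity, hW τ hτ'.1 hτ'.2,
    hsys.eq_geodesicW hlam ha ht₀ hτ hτ'.2]

end GeoSysH

section Extension

variable {lam mu : ℝ → ℝ} {m F : ℝ}

lemma geoSysH_of_hasDerivAt_geodesicSpeed {T : ℝ → ℝ} {w₀ τ₀ : ℝ}
    (hlam : ∀ t, 1 ≤ t → DifferentiableAt ℝ lam t)
    (hT : ∀ y, 0 < y → 1 ≤ T y ∧ HasDerivAt T (geodesicSpeed lam mu m F w₀ (T y)) y) :
    GeoSysH lam mu m F τ₀ ⊤ (fun τ => T (τ - τ₀)) (fun τ => geodesicW lam w₀ (T (τ - τ₀))) := by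
  intro τ hτ _
  obtain ⟨hT1, hTderiv⟩ := hT (τ - τ₀) (sub_pos.2 (EReal.coe_lt_coe_iff.1 hτ))
  have htt := hTderiv.comp_sub_const τ τ₀
  have hww := (hasDerivAt_geodesicW (w₀ := w₀) (hlam _ hT1).hasDerivAt).comp τ htt
  refine ⟨htt, hww.congr_deriv ?_⟩
  rw [geodesicSpeed]
  ring

lemma GeoRightMaxH.eq_top {a b : EReal} {tt ww tt' ww' : ℝ → ℝ} {τ₀ : ℝ}
    (hmax : GeoRightMaxH lam mu m F a b tt ww) (hsys' : GeoSysH lam mu m F τ₀ ⊤ tt' ww')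
    (hτ₀ : (τ₀ : EReal) < b)
    (hagree : ∀ τ : ℝ, τ₀ ≤ τ → (τ : EReal) < b → tt τ = tt' τ ∧ ww τ = ww' τ) : b = ⊤ := by
  by_contra hne
  lift b to ℝ using ⟨hne, ne_bot_of_gt hτ₀⟩ with β
  have hτ₀β : τ₀ < β := EReal.coe_lt_coe_iff.1 hτ₀
  set tt'' := fun τ => if τ ≤ τ₀ then tt τ else tt' τ
  set ww'' := fun τ => if τ ≤ τ₀ then ww τ else ww' τ
  have hsame : ∀ τ : ℝ, a < τ → (τ : EReal) < β → tt'' τ = tt τ ∧ ww'' τ = ww τ := by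
    intro τ _ hτ
    by_cases hτ₀τ : τ ≤ τ₀
    · simp only [tt'', ww'', if_pos hτ₀τ, and_self]
    · simp only [tt'', ww'', if_neg hτ₀τ]
      obtain ⟨h1, h2⟩ := hagree τ (le_of_not_ge hτ₀τ) hτ
      exact ⟨h1.symm, h2.symm⟩
  refine hmax.2 ⊤ tt'' ww'' (EReal.coe_lt_top β) (fun τ haτ _ => ?_) hsame
  rcases lt_or_ge τ β with hτβ | hτβ
  · have hnhds : ((↑) ⁻¹' Ioo a β : Set ℝ) ∈ 𝓝 τ :=
      (isOpen_Ioo.preimage continuous_coe_real_ereal).mem_nhds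
        ⟨haτ, EReal.coe_lt_coe_iff.2 hτβ⟩
    have htt : tt'' =ᶠ[𝓝 τ] tt := Filter.mem_of_superset hnhds fun σ hσ => (hsame σ hσ.1 hσ.2).1
    have hww : ww'' =ᶠ[𝓝 τ] ww := Filter.mem_of_superset hnhds fun σ hσ => (hsame σ hσ.1 hσ.2).2
    obtain ⟨h1, h2⟩ := hmax.1 τ haτ (EReal.coe_lt_coe_iff.2 hτβ)
    rw [htt.eq_of_nhds, hww.eq_of_nhds]
    exact ⟨h1.congr_of_eventuallyEq htt, h2.congr_of_eventuallyEq hww⟩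
  · have hτ₀τ : τ₀ < τ := hτ₀β.trans_le hτβ
    have htt : tt'' =ᶠ[𝓝 τ] tt' :=
      Filter.mem_of_superset (Ioi_mem_nhds hτ₀τ) fun σ hσ => if_neg (not_le.2 hσ)
    have hww : ww'' =ᶠ[𝓝 τ] ww' :=
      Filter.mem_of_superset (Ioi_mem_nhds hτ₀τ) fun σ hσ => if_neg (not_le.2 hσ)
    obtain ⟨h1, h2⟩ := hsys' τ (EReal.coe_lt_coe_iff.2 hτ₀τ) (EReal.coe_lt_top τ)
    rw [htt.eq_of_nhds, hww.eq_of_nhds]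
    exact ⟨h1.congr_of_eventuallyEq htt, h2.congr_of_eventuallyEq hww⟩

end Extension

theorem homogeneous_geodesic_completeness_general (k : ℝ) (lam mu phi : ℝ → ℝ)
    (f : ℝ → ℝ → ℝ → ℝ) (hk : k = 0 ∨ k = -1)
    (h : IsEVSHom k ⊤ lam mu phi f)
    (m F : ℝ) (hF : 0 ≤ F)
    (a b : EReal) (tt ww : ℝ → ℝ) (τ₀ : ℝ)
    (hτ₀ : a < (τ₀ : EReal) ∧ (τ₀ : EReal) < b)
    (hgeo : GeoRightMaxH lam mu m F a b tt ww)
    (ht0 : tt τ₀ = 1)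
    (hcausal : 0 < m ∨ (m = 0 ∧
      0 < Real.exp (-(mu 1)) * Real.sqrt (ww τ₀ ^ 2 + F))) :
    b = ⊤
    ∧ ∀ W : ℝ → ℝ,
        (∀ τ : ℝ, a < (τ : EReal) → (τ : EReal) < b → W (tt τ) = ww τ) →
        Filter.Tendsto (fun x => ∫ t in (1 : ℝ)..x,
            Real.exp (mu t) / Real.sqrt (m ^ 2 + W t ^ 2 + F / t ^ 2))
          Filter.atTop Filter.atTop := by
  obtain ⟨hτa, hτb⟩ := hτ₀
  have hk0 : k ≤ 0 := by rcases hk with rfl | rfl <;> norm_num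
  have hpos : 0 < m ^ 2 + ww τ₀ ^ 2 + F := by
    rcases hcausal with hm | ⟨rfl, hnull⟩
    · positivity
    · linarith [sqrt_pos.1 (pos_of_mul_pos_right hnull (exp_pos _).le)]
  have hlam : ∀ t, 1 ≤ t → DifferentiableAt ℝ lam t := fun t ht => h.reg_lam t (inDom_top ht)
  obtain ⟨T, hTG, hT⟩ := h.exists_leftInverse_clampedPrimitive_properTimeDensity hk0 hF hpos
  have htt : ∀ τ, τ₀ ≤ τ → (τ : EReal) < b → tt τ = T (τ - τ₀) := fun τ hτ hb => by
    rw [← hgeo.1.clampedPrimitive_eq hlam h.continuousOn_mu hF hpos hτa ht0 hτ hb, hTG]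
  have hb : b = ⊤ := hgeo.eq_top (geoSysH_of_hasDerivAt_geodesicSpeed hlam hT) hτb
    fun τ hτ hb => ⟨htt τ hτ hb, by rw [hgeo.1.eq_geodesicW hlam hτa ht0 hτ hb, htt τ hτ hb]⟩
  subst hb
  refine ⟨rfl, fun W hW => (h.tendsto_clampedPrimitive_properTimeDensity hk0 hF hpos).congr' ?_⟩
  filter_upwards [eventually_ge_atTop 1] with x hx
  exact (hgeo.1.integral_eq_clampedPrimitive hlam h.continuousOn_mu hF hpos hτa ht0 hW hx).symm

/-- Theorem 4, completeness part: spatially homogeneous solutions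
with `k ∈ {0, −1}` on `[1, ∞)` are future timelike and null geodesically complete:
along any maximally extended future-directed causal geodesic starting at `t = 1`
the proper time integral diverges and `τ₊ = +∞`. -/
theorem homogeneous_geodesic_completeness (k : ℝ) (lam mu phi : ℝ → ℝ)
    (f : ℝ → ℝ → ℝ → ℝ) (hk : k = 0 ∨ k = -1)
    (h : IsEVSHom k ⊤ lam mu phi f)
    (m F : ℝ) (hm : 0 ≤ m) (hF : 0 ≤ F)
    (a b : EReal) (tt ww : ℝ → ℝ) (τ₀ : ℝ)
    (hτ₀ : a < (τ₀ : EReal) ∧ (τ₀ : EReal) < b)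
    (hgeo : GeoRightMaxH lam mu m F a b tt ww)
    (ht0 : tt τ₀ = 1)
    (hcausal : 0 < m ∨ (m = 0 ∧
      0 < Real.exp (-(mu 1)) * Real.sqrt (ww τ₀ ^ 2 + F))) :
    b = ⊤
    ∧ ∀ W : ℝ → ℝ,
        (∀ τ : ℝ, a < (τ : EReal) → (τ : EReal) < b → W (tt τ) = ww τ) →
        Filter.Tendsto (fun x => ∫ t in (1 : ℝ)..x,
            Real.exp (mu t) / Real.sqrt (m ^ 2 + W t ^ 2 + F / t ^ 2))
          Filter.atTop Filter.atTop :=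
  homogeneous_geodesic_completeness_general k lam mu phi f hk h m F hF a b tt ww τ₀ hτ₀ hgeo ht0
    hcausal
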